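/- Let d ≥ 1, 2 < q ≤ 2^* (q < ∞ if d ≤ 2), and K_{q,d} = inf over nonzero u ∈ H¹(ℝ^d) of (‖∇u‖₂² + ‖u‖₂²)/‖u‖_q². Then lim_{q→2⁺} K_{q,d} = 1. -/

import Mathlib

open MeasureTheory Real Filter

noncomputable section

/-- `K_{q,d}`: optimal constant in the Gagliardo–Nirenberg–Sobolev inequality
`K_{q,d} ‖u‖_q² ≤ ‖∇u‖₂² + ‖u‖₂²` on `ℝ^d`. -/
def Kqd (d : ℕ) (q : ℝ) : ℝ :=
  sInf {r : ℝ | ∃ u : EuclideanSpace ℝ (Fin d) → ℝ, ContDiff ℝ 1 u ∧ HasCompactSupport u ∧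
    (∫ x, |u x| ^ q) ≠ 0 ∧
    r = ((∫ x, ‖gradient u x‖ ^ 2) + ∫ x, u x ^ 2) / (∫ x, |u x| ^ q) ^ (2/q)}

namespace KqdAux

open Metric Set Function Module
open scoped ENNReal NNReal Topology

variable {d : ℕ}

/-- The set over which the infimum is taken in `Kqd`. -/
def S (d : ℕ) (q : ℝ) : Set ℝ :=
  {r : ℝ | ∃ u : EuclideanSpace ℝ (Fin d) → ℝ, ContDiff ℝ 1 u ∧ HasCompactSupport u ∧
    (∫ x, |u x| ^ q) ≠ 0 ∧
    r = ((∫ x, ‖gradient u x‖ ^ 2) + ∫ x, u x ^ 2) / (∫ x, |u x| ^ q) ^ (2/q)}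

lemma abs_rpow_two (a : ℝ) : |a| ^ (2:ℝ) = a ^ 2 := by
  rw [show (2:ℝ) = ((2:ℕ):ℝ) by norm_num, Real.rpow_natCast, sq_abs]

lemma norm_gradient_eq (u : EuclideanSpace ℝ (Fin d) → ℝ) (x : EuclideanSpace ℝ (Fin d)) :
    ‖gradient u x‖ = ‖fderiv ℝ u x‖ :=
  (InnerProductSpace.toDual ℝ _).symm.norm_map _

section Integrability

variable {u : EuclideanSpace ℝ (Fin d) → ℝ}

lemma integrable_sq (hu : ContDiff ℝ 1 u) (h2u : HasCompactSupport u) :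
    Integrable (fun x => u x ^ 2) := by
  refine (hu.continuous.pow 2).integrable_of_hasCompactSupport ?_
  have := h2u.comp_left (g := fun a : ℝ => a ^ 2) (by simp)
  exact this

lemma continuous_gradient (hu : ContDiff ℝ 1 u) : Continuous (gradient u) :=
  (InnerProductSpace.toDual ℝ _).symm.continuous.comp (hu.continuous_fderiv one_ne_zero)

lemma hasCompactSupport_gradient (h2u : HasCompactSupport u) :
    HasCompactSupport (gradient u) := by
  have h1 : HasCompactSupport (fderiv ℝ u) := HasCompactSupport.fderiv (𝕜 := ℝ) h2u
  exact h1.comp_left (g := (InnerProductSpace.toDual ℝ _).symm) (map_zero _)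

lemma integrable_grad_sq (hu : ContDiff ℝ 1 u) (h2u : HasCompactSupport u) :
    Integrable (fun x => ‖gradient u x‖ ^ 2) := by
  refine ((continuous_gradient hu).norm.pow 2).integrable_of_hasCompactSupport ?_
  have := (hasCompactSupport_gradient h2u).comp_left (g := fun v => ‖v‖ ^ 2) (by simp)
  exact this

lemma continuous_rpow_abs (hu : ContDiff ℝ 1 u) {q : ℝ} (hq : 0 < q) :
    Continuous (fun x => |u x| ^ q) :=
  hu.continuous.abs.rpow_const fun _ => Or.inr hq.le

lemma hasCompactSupport_rpow_abs (h2u : HasCompactSupport u) {q : ℝ} (hq : 0 < q) :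
    HasCompactSupport (fun x => |u x| ^ q) :=
  h2u.comp_left (g := fun a : ℝ => |a| ^ q) (by simp [Real.zero_rpow hq.ne'])

lemma integrable_rpow_abs (hu : ContDiff ℝ 1 u) (h2u : HasCompactSupport u) {q : ℝ}
    (hq : 0 < q) : Integrable (fun x => |u x| ^ q) :=
  (continuous_rpow_abs hu hq).integrable_of_hasCompactSupport
    (hasCompactSupport_rpow_abs h2u hq)

end Integrability

lemma S_nonneg {q : ℝ} {a : ℝ} (ha : a ∈ S d q) : 0 ≤ a := by
  obtain ⟨u, -, -, -, rfl⟩ := ha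
  have h1 : 0 ≤ ∫ x, ‖gradient u x‖ ^ 2 := integral_nonneg fun x => sq_nonneg _
  have h2 : 0 ≤ ∫ x, u x ^ 2 := integral_nonneg fun x => sq_nonneg _
  have h3 : 0 ≤ (∫ x, |u x| ^ q) ^ (2/q) :=
    Real.rpow_nonneg (integral_nonneg fun x => Real.rpow_nonneg (abs_nonneg _) _) _
  exact div_nonneg (by linarith) h3

lemma S_bddBelow (d : ℕ) (q : ℝ) : BddBelow (S d q) :=
  ⟨0, fun _ ha => S_nonneg ha⟩

/-! ### The one-dimensional Sobolev-type inequality -/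

set_option maxHeartbeats 800000 in
lemma sobolev_d1 :
    ∀ u : EuclideanSpace ℝ (Fin 1) → ℝ, ContDiff ℝ 1 u → HasCompactSupport u →
    (∫ x, |u x| ^ (4:ℝ)) ≤
      ((1:ℝ) * ((∫ x, ‖gradient u x‖ ^ 2) + ∫ x, u x ^ 2)) ^ ((4:ℝ)/2) := by
  intro u hu h2u
  -- the isometry between ℝ and EuclideanSpace ℝ (Fin 1)
  let φ₀ : ℝ ≃ₗ[ℝ] EuclideanSpace ℝ (Fin 1) :=
    (LinearEquiv.funUnique (Fin 1) ℝ ℝ).symm.trans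
      (WithLp.linearEquiv 2 ℝ (Fin 1 → ℝ)).symm
  let φ : ℝ ≃ₗᵢ[ℝ] EuclideanSpace ℝ (Fin 1) :=
    ⟨φ₀, fun x => by
      simp only [φ₀, LinearEquiv.trans_apply, WithLp.linearEquiv_symm_apply]
      rw [EuclideanSpace.norm_eq]
      simp [Real.sqrt_sq_eq_abs, Real.norm_eq_abs]⟩
  have hφ1 : ‖φ 1‖ = 1 := by rw [φ.norm_map]; norm_num
  set G := ∫ x, ‖gradient u x‖ ^ 2 with hG
  set M := ∫ x, u x ^ 2 with hM
  have hGnn : 0 ≤ G := integral_nonneg fun x => sq_nonneg _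
  have hMnn : 0 ≤ M := integral_nonneg fun x => sq_nonneg _
  set w : ℝ → ℝ := fun t => u (φ t) with hwdef
  have hw : ContDiff ℝ 1 w := hu.comp φ.contDiff
  have h2w : HasCompactSupport w := h2u.comp_homeomorph φ.toHomeomorph
  have hwc := hw.continuous
  have hIw : Integrable (fun s => w s * w s) := by
    refine (hwc.mul hwc).integrable_of_hasCompactSupport ?_
    exact h2w.comp_left (g := fun a : ℝ => a * a) (by simp)
  have hwd : ∀ t, HasDerivAt w (deriv w t) t :=
    fun t => ((hw.differentiable one_ne_zero) t).hasDerivAt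
  have hIw' : Integrable (fun s => deriv w s ^ 2) := by
    refine ((hw.continuous_deriv le_rfl).pow 2).integrable_of_hasCompactSupport ?_
    have := h2w.deriv.comp_left (g := fun a : ℝ => a ^ 2) (by simp)
    exact this
  -- derivative comparison
  have hderle : ∀ s, |deriv w s| ≤ ‖gradient u (φ s)‖ := by
    intro s
    have h1 : HasDerivAt (fun t : ℝ => t • (φ 1)) (φ 1) s := by
      simpa using (hasDerivAt_id s).smul_const (φ 1)
    have hsmul : ∀ t : ℝ, t • φ 1 = φ t := fun t => by
      rw [← φ.map_smul, smul_eq_mul, mul_one]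
    have hweq : w = fun t : ℝ => u (t • φ 1) := by
      funext t
      rw [hwdef, hsmul t]
    have h2 := (hu.differentiable one_ne_zero (φ s)).hasFDerivAt
    have h2' : HasFDerivAt u (fderiv ℝ u (φ s)) ((fun t : ℝ => t • (φ 1)) s) := by
      simpa [hsmul s] using h2
    have h3 := h2'.comp_hasDerivAt s h1
    have h4 : HasDerivAt w (fderiv ℝ u (φ s) (φ 1)) s := by
      rw [hweq]; exact h3
    rw [h4.deriv, norm_gradient_eq]
    calc |fderiv ℝ u (φ s) (φ 1)| = ‖fderiv ℝ u (φ s) (φ 1)‖ := rfl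
      _ ≤ ‖fderiv ℝ u (φ s)‖ * ‖φ 1‖ := (fderiv ℝ u (φ s)).le_opNorm _
      _ = ‖fderiv ℝ u (φ s)‖ := by rw [hφ1, mul_one]
  have hIgradcomp : Integrable (fun s => ‖gradient u (φ s)‖ ^ 2) :=
    (MeasureTheory.integrable_comp φ (fun y => ‖gradient u y‖ ^ 2)).2
      (integrable_grad_sq hu h2u)
  have hintgradcomp : ∫ s, ‖gradient u (φ s)‖ ^ 2 = G :=
    MeasureTheory.integral_comp φ (fun y => ‖gradient u y‖ ^ 2)
  have hintw2 : ∫ s, w s * w s = M := by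
    have := MeasureTheory.integral_comp φ (fun y => u y * u y)
    rw [hwdef]
    simp only [hM, pow_two]
    exact this
  -- FTC bound
  have hv : ContDiff ℝ 1 (fun t => w t * w t) := hw.mul hw
  have h2v : HasCompactSupport (fun t => w t * w t) :=
    h2w.comp_left (g := fun a : ℝ => a * a) (by simp)
  have key : ∀ x, u x * u x ≤ G + M := by
    intro x
    set t := φ.symm x with htdef
    have hwt : w t * w t = u x * u x := by
      rw [hwdef, htdef]; simp
    rw [← hwt]
    have hFTC : w t * w t = ∫ s in Iic t, deriv (fun s => w s * w s) s :=
      (HasCompactSupport.integral_Iic_deriv_eq hv h2v t).symm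
    have hdeq : ∀ s, deriv (fun s => w s * w s) s = deriv w s * w s + w s * deriv w s :=
      fun s => ((hwd s).mul (hwd s)).deriv
    have step1 : w t * w t ≤ ∫ s in Iic t, (w s * w s + deriv w s ^ 2) := by
      rw [hFTC]
      refine setIntegral_mono ?_ ?_ ?_
      · refine Integrable.integrableOn ?_
        have : Continuous (deriv (fun s => w s * w s)) := by
          have : (fun s => deriv (fun s => w s * w s) s)
              = fun s => deriv w s * w s + w s * deriv w s := funext hdeq
          rw [show deriv (fun s => w s * w s) = fun s => deriv (fun s => w s * w s) s from rfl,
            this]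
          exact ((hw.continuous_deriv le_rfl).mul hwc).add
            (hwc.mul (hw.continuous_deriv le_rfl))
        refine this.integrable_of_hasCompactSupport ?_
        exact h2v.deriv
      · exact (hIw.add hIw').integrableOn
      · intro s
        show deriv (fun s => w s * w s) s ≤ w s * w s + deriv w s ^ 2
        rw [hdeq s]
        nlinarith [sq_nonneg (w s - deriv w s), sq_nonneg (w s + deriv w s)]
    refine step1.trans ?_
    have step2 : ∫ s in Iic t, (w s * w s + deriv w s ^ 2)
        ≤ ∫ s, (w s * w s + deriv w s ^ 2) := by
      refine setIntegral_le_integral (hIw.add hIw') ?_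
      filter_upwards with s
      show (0:ℝ) ≤ w s * w s + deriv w s ^ 2
      nlinarith [sq_nonneg (w s), sq_nonneg (deriv w s)]
    refine step2.trans ?_
    rw [integral_add hIw hIw']
    have step3 : ∫ s, deriv w s ^ 2 ≤ G := by
      rw [← hintgradcomp]
      refine integral_mono hIw' hIgradcomp ?_
      intro s
      have := hderle s
      calc deriv w s ^ 2 = |deriv w s| ^ 2 := (sq_abs _).symm
        _ ≤ ‖gradient u (φ s)‖ ^ 2 := by
            exact pow_le_pow_left₀ (abs_nonneg _) this 2
    rw [hintw2]
    linarith
  -- conclude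
  have hI4 : Integrable (fun x => |u x| ^ (4:ℝ)) := integrable_rpow_abs hu h2u (by norm_num)
  have hIu2 : Integrable (fun x => u x * u x) := by
    have := integrable_sq hu h2u
    simpa [pow_two] using this
  have h4eq : ∀ x : EuclideanSpace ℝ (Fin 1),
      |u x| ^ (4:ℝ) = (u x * u x) * (u x * u x) := by
    intro x
    rw [show (4:ℝ) = ((4:ℕ):ℝ) by norm_num, Real.rpow_natCast,
      show (4:ℕ) = 2 * 2 from rfl, pow_mul, sq_abs]
    ring
  have hbound : ∫ x, |u x| ^ (4:ℝ) ≤ (G + M) * M := by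
    have hMuu : (∫ x, u x * u x) = M := by
      rw [hM]; congr 1; funext x; ring
    have hmono : ∫ x, |u x| ^ (4:ℝ) ≤ ∫ x, (G + M) * (u x * u x) := by
      refine integral_mono hI4 (hIu2.const_mul _) ?_
      intro x
      show |u x| ^ (4:ℝ) ≤ (G + M) * (u x * u x)
      rw [h4eq x]
      exact mul_le_mul_of_nonneg_right (key x) (mul_self_nonneg _)
    rwa [integral_const_mul, hMuu] at hmono
  have hMG : M ≤ G + M := by linarith
  have : ∫ x, |u x| ^ (4:ℝ) ≤ (G + M) * (G + M) :=
    hbound.trans (mul_le_mul_of_nonneg_left hMG (by linarith))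
  rw [one_mul, show ((4:ℝ)/2) = ((2:ℕ):ℝ) by norm_num, Real.rpow_natCast]
  nlinarith [this]

/-! ### The Sobolev inequality in dimension `≥ 2` -/

lemma sobolev_d2 (hd : 2 ≤ d) :
    ∃ K : ℝ, 1 ≤ K ∧ ∀ u : EuclideanSpace ℝ (Fin d) → ℝ,
      ContDiff ℝ 1 u → HasCompactSupport u →
      (∫ x, |u x| ^ (2*(d:ℝ)/((d:ℝ)-1))) ≤
        (K * ((∫ x, ‖gradient u x‖ ^ 2) + ∫ x, u x ^ 2)) ^ ((2*(d:ℝ)/((d:ℝ)-1))/2) := by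
  have hd2 : (2:ℝ) ≤ (d:ℝ) := by exact_mod_cast hd
  have hdpos : (0:ℝ) < (d:ℝ) := by linarith
  have hd1pos : (0:ℝ) < (d:ℝ) - 1 := by linarith
  set pr : ℝ := (d:ℝ)/((d:ℝ)-1) with hprdef
  have hprpos : 0 < pr := div_pos hdpos hd1pos
  set p' : ℝ≥0 := Real.toNNReal pr with hp'def
  have hp'coe : (p' : ℝ) = pr := Real.coe_toNNReal _ hprpos.le
  set C : ℝ≥0 :=
    SNormLESNormFDerivOfEqConst (F := ℝ) (volume : Measure (EuclideanSpace ℝ (Fin d))) 1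
    with hCdef
  refine ⟨max (C:ℝ) 1, le_max_right _ _, ?_⟩
  intro u hu h2u
  set G := ∫ x, ‖gradient u x‖ ^ 2 with hG
  set M := ∫ x, u x ^ 2 with hM
  have hGnn : 0 ≤ G := integral_nonneg fun x => sq_nonneg _
  have hMnn : 0 ≤ M := integral_nonneg fun x => sq_nonneg _
  set v : EuclideanSpace ℝ (Fin d) → ℝ := fun x => u x ^ 2 with hvdef
  have hv : ContDiff ℝ 1 v := hu.pow 2
  have h2v : HasCompactSupport v := h2u.comp_left (g := fun a : ℝ => a ^ 2) (by simp)
  have hn : 0 < finrank ℝ (EuclideanSpace ℝ (Fin d)) := by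
    rw [finrank_euclideanSpace_fin]; omega
  have hp' : ((p' : ℝ))⁻¹ = ((1:ℝ≥0) : ℝ)⁻¹ - ((finrank ℝ (EuclideanSpace ℝ (Fin d)) : ℝ))⁻¹ := by
    rw [finrank_euclideanSpace_fin, hp'coe, hprdef, inv_div]
    push_cast
    field_simp
  have sob := eLpNorm_le_eLpNorm_fderiv_of_eq (μ := volume) hv h2v (p := 1) (p' := p')
    le_rfl hn hp'
  -- convert eLpNorms to integrals
  have hvM : MemLp v (p' : ℝ≥0∞) volume := hv.continuous.memLp_of_hasCompactSupport h2v
  have hp'0 : ((p' : ℝ≥0∞)) ≠ 0 := by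
    simp only [ne_eq, ENNReal.coe_eq_zero]
    rw [hp'def]
    simp [Real.toNNReal_eq_zero, not_le, hprpos]
  have hptoReal : ((p' : ℝ≥0∞)).toReal = pr := by
    rw [ENNReal.coe_toReal, hp'coe]
  have hLHS := hvM.eLpNorm_eq_integral_rpow_norm hp'0 ENNReal.coe_ne_top
  have hdMem : MemLp (fderiv ℝ v) 1 volume :=
    (hv.continuous_fderiv one_ne_zero).memLp_of_hasCompactSupport
      (HasCompactSupport.fderiv (𝕜 := ℝ) h2v)
  have hRHS := hdMem.eLpNorm_eq_integral_rpow_norm one_ne_zero ENNReal.one_ne_top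
  simp only [ENNReal.coe_one, NNReal.coe_one] at sob
  rw [hLHS, hRHS, hptoReal] at sob
  simp only [ENNReal.toReal_one, Real.rpow_one, inv_one] at sob
  rw [← ENNReal.ofReal_coe_nnreal, ← ENNReal.ofReal_mul (C.coe_nonneg)] at sob
  have hYnn : 0 ≤ ∫ x, ‖fderiv ℝ v x‖ := integral_nonneg fun x => norm_nonneg _
  have sobR : (∫ x, ‖v x‖ ^ pr) ^ pr⁻¹ ≤ (C:ℝ) * ∫ x, ‖fderiv ℝ v x‖ :=
    (ENNReal.ofReal_le_ofReal_iff (by positivity)).1 sob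
  -- rewrite the LHS integrand
  have hint1 : ∀ x : EuclideanSpace ℝ (Fin d), ‖v x‖ ^ pr = |u x| ^ (2*(d:ℝ)/((d:ℝ)-1)) := by
    intro x
    rw [hvdef]
    rw [Real.norm_eq_abs, abs_pow, ← Real.rpow_natCast |u x| 2, ← Real.rpow_mul (abs_nonneg _)]
    norm_num
    rw [hprdef]
    ring_nf
  simp only [hint1] at sobR
  -- bound the RHS
  have hveq : v = fun x => u x * u x := by
    funext x; rw [hvdef]; ring
  have hfd : ∀ x, ‖fderiv ℝ v x‖ ≤ u x ^ 2 + ‖gradient u x‖ ^ 2 := by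
    intro x
    have hD : HasFDerivAt v (u x • fderiv ℝ u x + u x • fderiv ℝ u x) x := by
      rw [hveq]
      exact ((hu.differentiable one_ne_zero x).hasFDerivAt).mul
        ((hu.differentiable one_ne_zero x).hasFDerivAt)
    rw [hD.fderiv, ← add_smul, norm_smul, Real.norm_eq_abs, norm_gradient_eq]
    have h2 : |u x + u x| = 2 * |u x| := by
      rw [← two_mul, abs_mul]; norm_num
    rw [h2]
    nlinarith [two_mul_le_add_sq |u x| ‖fderiv ℝ u x‖, sq_abs (u x),
      norm_nonneg (fderiv ℝ u x), abs_nonneg (u x)]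
  have hIfd : Integrable (fun x => ‖fderiv ℝ v x‖) := by
    refine (hv.continuous_fderiv one_ne_zero).norm.integrable_of_hasCompactSupport ?_
    exact (HasCompactSupport.fderiv (𝕜 := ℝ) h2v).comp_left (g := fun L => ‖L‖) (by simp)
  have hY : ∫ x, ‖fderiv ℝ v x‖ ≤ G + M := by
    have h1 : ∫ x, ‖fderiv ℝ v x‖ ≤ ∫ x, (u x ^ 2 + ‖gradient u x‖ ^ 2) :=
      integral_mono hIfd
        (by exact (integrable_sq hu h2u).add (integrable_grad_sq hu h2u)) hfd
    rw [integral_add (integrable_sq hu h2u) (integrable_grad_sq hu h2u), ← hM, ← hG] at h1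
    linarith
  have hKnn : (0:ℝ) ≤ max (C:ℝ) 1 := le_trans zero_le_one (le_max_right _ _)
  have hchain : (∫ x, |u x| ^ (2*(d:ℝ)/((d:ℝ)-1))) ^ pr⁻¹ ≤ max (C:ℝ) 1 * (G + M) := by
    refine sobR.trans ?_
    exact mul_le_mul (le_max_left _ _) hY hYnn hKnn
  have hXnn : 0 ≤ ∫ x, |u x| ^ (2*(d:ℝ)/((d:ℝ)-1)) :=
    integral_nonneg fun x => Real.rpow_nonneg (abs_nonneg _) _
  have hfin := Real.rpow_le_rpow (Real.rpow_nonneg hXnn _) hchain hprpos.le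
  rw [Real.rpow_inv_rpow hXnn hprpos.ne'] at hfin
  rw [show (2*(d:ℝ)/((d:ℝ)-1))/2 = pr by rw [hprdef]; ring]
  exact hfin

/-! ### Lower bound for elements of `S` -/

lemma lower_core {r K : ℝ} (hr : 2 < r) (hK : 1 ≤ K)
    (H : ∀ u : EuclideanSpace ℝ (Fin d) → ℝ, ContDiff ℝ 1 u → HasCompactSupport u →
      (∫ x, |u x| ^ r) ≤ (K * ((∫ x, ‖gradient u x‖ ^ 2) + ∫ x, u x ^ 2)) ^ (r/2))
    {q : ℝ} (hq2 : 2 < q) (hqr : q < r) {a : ℝ} (ha : a ∈ S d q) :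
    K ^ (-(r * ((q - 2)/(r - 2)) / q)) ≤ a := by
  obtain ⟨u, hu, h2u, hQ0, rfl⟩ := ha
  have hK0 : (0:ℝ) < K := zero_lt_one.trans_le hK
  have hq0 : (0:ℝ) < q := by linarith
  have hr2 : (0:ℝ) < r - 2 := by linarith
  set G := ∫ x, ‖gradient u x‖ ^ 2 with hG
  set M := ∫ x, u x ^ 2 with hM
  set Q := ∫ x, |u x| ^ q with hQ
  set R := ∫ x, |u x| ^ r with hR
  have hGnn : 0 ≤ G := integral_nonneg fun x => sq_nonneg _
  have hMnn : 0 ≤ M := integral_nonneg fun x => sq_nonneg _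
  have hQnn : 0 ≤ Q := integral_nonneg fun x => Real.rpow_nonneg (abs_nonneg _) _
  have hRnn : 0 ≤ R := integral_nonneg fun x => Real.rpow_nonneg (abs_nonneg _) _
  have hQpos : 0 < Q := hQnn.lt_of_ne (Ne.symm hQ0)
  set N := G + M with hN
  have hMN : M ≤ N := by rw [hN]; linarith
  have hNnn : 0 ≤ N := by rw [hN]; linarith
  have hNpos : 0 < N := by
    rcases hNnn.lt_or_eq with h | h
    · exact h
    · exfalso
      have hM0 : M = 0 := le_antisymm (h ▸ hMN) hMnn
      have hae' : (fun x => u x ^ 2) =ᵐ[volume] 0 :=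
        (integral_eq_zero_iff_of_nonneg (fun x => sq_nonneg (u x))
          (integrable_sq hu h2u)).1 hM0
      apply hQ0
      rw [hQ]
      rw [integral_eq_zero_iff_of_nonneg (fun x => Real.rpow_nonneg (abs_nonneg _) _)
        (integrable_rpow_abs hu h2u hq0)]
      filter_upwards [hae'] with x hx
      have hx0 : u x = 0 := by
        have h2 : u x ^ 2 = 0 := hx
        exact (pow_eq_zero_iff (by norm_num : (2:ℕ) ≠ 0)).mp h2
      simp [hx0, Real.zero_rpow hq0.ne']
  set t := (q - 2)/(r - 2) with ht
  have ht0 : 0 < t := div_pos (by linarith) hr2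
  have ht1 : t < 1 := (div_lt_one hr2).2 (by linarith)
  have h1t : 0 < 1 - t := by linarith
  have hqe : 2*(1 - t) + r*t = q := by
    rw [ht]; field_simp; ring
  -- Hölder
  have hconj : ((1 - t)⁻¹).HolderConjugate t⁻¹ := by
    rw [Real.holderConjugate_iff]
    constructor
    · nlinarith [mul_inv_cancel₀ (ne_of_gt h1t), inv_pos.2 h1t]
    · rw [inv_inv, inv_inv]; ring
  have hfc : Continuous fun x => |u x| ^ (2*(1-t)) :=
    hu.continuous.abs.rpow_const fun _ => Or.inr (by positivity)
  have hgc : Continuous fun x => |u x| ^ (r*t) :=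
    hu.continuous.abs.rpow_const fun _ => Or.inr (by positivity)
  have hfcs : HasCompactSupport fun x => |u x| ^ (2*(1-t)) :=
    h2u.comp_left (g := fun a : ℝ => |a| ^ (2*(1-t)))
      (by simp [Real.zero_rpow (by positivity : (0:ℝ) < 2*(1-t)).ne'])
  have hgcs : HasCompactSupport fun x => |u x| ^ (r*t) :=
    h2u.comp_left (g := fun a : ℝ => |a| ^ (r*t))
      (by simp [Real.zero_rpow (by positivity : (0:ℝ) < r*t).ne'])
  have key := integral_mul_le_Lp_mul_Lq_of_nonneg (μ := volume) hconj
    (f := fun x => |u x| ^ (2*(1-t))) (g := fun x => |u x| ^ (r*t))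
    (Eventually.of_forall fun x => Real.rpow_nonneg (abs_nonneg _) _)
    (Eventually.of_forall fun x => Real.rpow_nonneg (abs_nonneg _) _)
    (hfc.memLp_of_hasCompactSupport hfcs)
    (hgc.memLp_of_hasCompactSupport hgcs)
  have hL : ∀ x : EuclideanSpace ℝ (Fin d),
      |u x| ^ (2*(1-t)) * |u x| ^ (r*t) = |u x| ^ q := by
    intro x
    rw [← Real.rpow_add' (abs_nonneg _) (by rw [hqe]; exact hq0.ne'), hqe]
  have hfp : ∀ x : EuclideanSpace ℝ (Fin d),
      (|u x| ^ (2*(1-t))) ^ (1-t)⁻¹ = u x ^ 2 := by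
    intro x
    rw [← Real.rpow_mul (abs_nonneg _),
      show 2*(1-t)*(1-t)⁻¹ = (2:ℝ) by field_simp, abs_rpow_two]
  have hgp : ∀ x : EuclideanSpace ℝ (Fin d),
      (|u x| ^ (r*t)) ^ t⁻¹ = |u x| ^ r := by
    intro x
    rw [← Real.rpow_mul (abs_nonneg _)]
    rw [show r*t*t⁻¹ = r by field_simp]
  simp only [hL, hfp, hgp] at key
  rw [one_div, one_div, inv_inv, inv_inv] at key
  rw [← hQ, ← hM, ← hR] at key
  -- combine
  have hKN : (0:ℝ) ≤ K*N := by positivity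
  have hRb : R ≤ (K*N) ^ (r/2) := by
    have := H u hu h2u
    rw [← hG, ← hM, ← hR, ← hN] at this
    exact this
  have step : Q ≤ K ^ (r*t/2) * N ^ (q/2) := by
    calc Q ≤ M ^ (1-t) * R ^ t := key
    _ ≤ N ^ (1-t) * ((K*N) ^ (r/2)) ^ t := by
        refine mul_le_mul (Real.rpow_le_rpow hMnn hMN h1t.le)
          (Real.rpow_le_rpow hRnn hRb ht0.le) (Real.rpow_nonneg hRnn _)
          (Real.rpow_nonneg hNnn _)
    _ = K ^ (r/2*t) * (N ^ (1-t) * N ^ (r/2*t)) := by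
        rw [← Real.rpow_mul hKN, Real.mul_rpow hK0.le hNpos.le]; ring
    _ = K ^ (r/2*t) * N ^ ((1-t) + r/2*t) := by rw [← Real.rpow_add hNpos]
    _ = K ^ (r*t/2) * N ^ (q/2) := by
        rw [show (1-t) + r/2*t = q/2 by linarith, show r/2*t = r*t/2 by ring]
  have step2 : Q ^ (2/q) ≤ K ^ (r*t/q) * N := by
    calc Q ^ (2/q) ≤ (K ^ (r*t/2) * N ^ (q/2)) ^ (2/q) :=
          Real.rpow_le_rpow hQnn step (by positivity)
    _ = K ^ (r*t/2*(2/q)) * N ^ (q/2*(2/q)) := by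
        rw [Real.mul_rpow (Real.rpow_nonneg hK0.le _) (Real.rpow_nonneg hNpos.le _),
          ← Real.rpow_mul hK0.le, ← Real.rpow_mul hNpos.le]
    _ = K ^ (r*t/q) * N := by
        rw [show r*t/2*(2/q) = r*t/q by field_simp,
          show q/2*(2/q) = 1 by field_simp, Real.rpow_one]
  rw [le_div_iff₀ (Real.rpow_pos_of_pos hQpos _)]
  calc K ^ (-(r*t/q)) * Q ^ (2/q)
      ≤ K ^ (-(r*t/q)) * (K ^ (r*t/q) * N) :=
        mul_le_mul_of_nonneg_left step2 (Real.rpow_nonneg hK0.le _)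
    _ = N := by
        rw [← mul_assoc, ← Real.rpow_add hK0, neg_add_cancel, Real.rpow_zero, one_mul]

/-! ### The test bump function -/

lemma exists_bump (d : ℕ) :
    ∃ Φ : EuclideanSpace ℝ (Fin d) → ℝ, ContDiff ℝ 1 Φ ∧ HasCompactSupport Φ ∧
      (∀ x, 0 ≤ Φ x) ∧ (∀ x, Φ x ≤ 1) ∧
      (∀ q : ℝ, 0 < q → 0 < ∫ x, |Φ x| ^ q) := by
  have hB : ContDiffBump (0 : EuclideanSpace ℝ (Fin d)) := ⟨1, 2, one_pos, one_lt_two⟩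
  refine ⟨hB, hB.contDiff, hB.hasCompactSupport, fun x => hB.nonneg, fun x => hB.le_one, ?_⟩
  intro q hq
  have hcont : ContDiff ℝ 1 (hB : EuclideanSpace ℝ (Fin d) → ℝ) := hB.contDiff
  rw [integral_pos_iff_support_of_nonneg
    (fun x => Real.rpow_nonneg (abs_nonneg _) _)
    (integrable_rpow_abs hcont hB.hasCompactSupport hq)]
  have hsupp : support (fun x => |hB x| ^ q)
      = Metric.ball (0 : EuclideanSpace ℝ (Fin d)) hB.rOut := by
    rw [← hB.support_eq]
    ext x
    simp only [mem_support]
    constructor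
    · intro h hx
      apply h
      simp [hx, Real.zero_rpow hq.ne']
    · intro h
      exact (Real.rpow_pos_of_pos (abs_pos.2 h) q).ne'
  rw [hsupp]
  exact measure_ball_pos _ _ hB.rOut_pos

lemma S_nonempty (d : ℕ) {q : ℝ} (hq : 0 < q) : (S d q).Nonempty := by
  obtain ⟨Φ, hc, hcs, h0, h1, hpos⟩ := exists_bump d
  exact ⟨_, Φ, hc, hcs, (hpos q hq).ne', rfl⟩

lemma tendsto_int_rpow {Φ : EuclideanSpace ℝ (Fin d) → ℝ} (hc : ContDiff ℝ 1 Φ)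
    (hcs : HasCompactSupport Φ) (h0 : ∀ x, 0 ≤ Φ x) (h1 : ∀ x, Φ x ≤ 1) :
    Tendsto (fun q : ℝ => ∫ x, |Φ x| ^ q) (nhdsWithin 2 (Set.Ioi 2)) (nhds (∫ x, Φ x ^ 2)) := by
  have habs2 : (∫ x, Φ x ^ 2) = ∫ x, |Φ x| ^ (2:ℝ) := by
    congr 1; funext x; rw [abs_rpow_two]
  rw [habs2]
  refine tendsto_integral_filter_of_dominated_convergence
    ((tsupport Φ).indicator fun _ => (1:ℝ)) ?_ ?_ ?_ ?_
  · filter_upwards [self_mem_nhdsWithin] with q hq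
    have : (0:ℝ) < q := lt_trans two_pos hq
    exact (hc.continuous.abs.rpow_const fun _ => Or.inr this.le).aestronglyMeasurable
  · filter_upwards [self_mem_nhdsWithin] with q hq
    have hq0 : (0:ℝ) < q := lt_trans two_pos hq
    refine Eventually.of_forall fun x => ?_
    rw [Real.norm_eq_abs, abs_of_nonneg (Real.rpow_nonneg (abs_nonneg _) _)]
    by_cases hx : x ∈ tsupport Φ
    · rw [indicator_of_mem hx]
      refine Real.rpow_le_one (abs_nonneg _) ?_ hq0.le
      rw [abs_of_nonneg (h0 x)]; exact h1 x
    · rw [indicator_of_notMem hx, image_eq_zero_of_notMem_tsupport hx]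
      simp [Real.zero_rpow hq0.ne']
  · rw [integrable_indicator_iff (isClosed_tsupport _).measurableSet]
    exact integrableOn_const hcs.measure_lt_top.ne
  · refine Eventually.of_forall fun x => ?_
    rcases eq_or_ne (Φ x) 0 with h | h
    · have hev : (fun q : ℝ => |Φ x| ^ q) =ᶠ[nhdsWithin 2 (Set.Ioi 2)] fun _ => 0 := by
        filter_upwards [self_mem_nhdsWithin] with q hq
        have : (0:ℝ) < q := lt_trans two_pos hq
        simp [h, Real.zero_rpow this.ne']
      rw [show |Φ x| ^ (2:ℝ) = 0 by simp [h, Real.zero_rpow two_ne_zero]]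
      exact Tendsto.congr' hev.symm tendsto_const_nhds
    · exact ((Real.continuousAt_const_rpow (abs_ne_zero.2 h)).tendsto).mono_left
        nhdsWithin_le_nhds

/-! ### The upper bound -/

lemma upper (d : ℕ) {b : ℝ} (hb : 1 < b) :
    ∀ᶠ q in nhdsWithin (2:ℝ) (Set.Ioi 2), sInf (S d q) < b := by
  obtain ⟨Φ, hΦc, hΦcs, hΦ0, hΦ1, hΦpos⟩ := exists_bump d
  set A := ∫ x, ‖gradient Φ x‖ ^ 2 with hA
  set B := ∫ x, Φ x ^ 2 with hB
  have hAnn : 0 ≤ A := integral_nonneg fun x => sq_nonneg _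
  have hBpos : 0 < B := by
    have := hΦpos 2 two_pos
    have heq : (∫ x, |Φ x| ^ (2:ℝ)) = B := by
      rw [hB]; congr 1; funext x; rw [abs_rpow_two]
    linarith [heq ▸ this]
  -- choose the scaling parameter
  obtain ⟨l, hl0, hl⟩ : ∃ l : ℝ, 0 < l ∧ l^2*A/B < (b-1)/2 := by
    rcases eq_or_lt_of_le hAnn with h | h
    · exact ⟨1, one_pos, by rw [← h]; simp; linarith⟩
    · have hq4 : (0:ℝ) < (b-1)*B/(4*A) := div_pos (mul_pos (by linarith) hBpos) (by linarith)
      refine ⟨Real.sqrt ((b-1)*B/(4*A)), Real.sqrt_pos.2 hq4, ?_⟩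
      rw [Real.sq_sqrt hq4.le]
      have hA' : ((b-1)*B/(4*A))*A/B = (b-1)/4 := by
        field_simp
      rw [hA']
      linarith
  set u : EuclideanSpace ℝ (Fin d) → ℝ := fun x => Φ (l • x) with hudef
  have hu : ContDiff ℝ 1 u := hΦc.comp (contDiff_id.const_smul l)
  have h2u : HasCompactSupport u :=
    hΦcs.comp_homeomorph (Homeomorph.smulOfNeZero l hl0.ne')
  set s : ℝ := |(l ^ finrank ℝ (EuclideanSpace ℝ (Fin d)))⁻¹| with hsdef
  have hspos : 0 < s := by
    rw [hsdef]
    positivity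
  have hcomp : ∀ f : EuclideanSpace ℝ (Fin d) → ℝ, ∫ x, f (l • x) = s * ∫ x, f x := by
    intro f
    rw [MeasureTheory.Measure.integral_comp_smul volume f l, smul_eq_mul, ← hsdef]
  -- the gradient of the scaled function
  have hgrad : ∀ x, ‖gradient u x‖ = |l| * ‖gradient Φ (l • x)‖ := by
    intro x
    rw [norm_gradient_eq, norm_gradient_eq]
    have h1 : HasFDerivAt (fun y : EuclideanSpace ℝ (Fin d) => l • y)
        (l • ContinuousLinearMap.id ℝ (EuclideanSpace ℝ (Fin d))) x :=
      (hasFDerivAt_id x).const_smul l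
    have h2 := (hΦc.differentiable one_ne_zero (l • x)).hasFDerivAt
    have h3 := h2.comp x h1
    have h4 : (fderiv ℝ Φ (l • x)).comp (l • ContinuousLinearMap.id ℝ _)
        = l • fderiv ℝ Φ (l • x) := by
      ext w
      simp [_root_.map_smul]
    have h3' : HasFDerivAt u (l • fderiv ℝ Φ (l • x)) x := h4 ▸ h3
    rw [h3'.fderiv, norm_smul, Real.norm_eq_abs]
  have hIeq1 : ∫ x, ‖gradient u x‖ ^ 2 = l^2 * (s * A) := by
    have : (fun x => ‖gradient u x‖ ^ 2)
        = fun x => l^2 * ((fun y => ‖gradient Φ y‖ ^ 2) (l • x)) := by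
      funext x
      rw [hgrad x]
      rw [mul_pow, sq_abs]
    rw [this, integral_const_mul, hcomp (fun y => ‖gradient Φ y‖ ^ 2), ← hA]
  have hIeq2 : ∫ x, u x ^ 2 = s * B := by
    rw [show (fun x => u x ^ 2) = fun x => (fun y => Φ y ^ 2) (l • x) from rfl,
      hcomp (fun y => Φ y ^ 2), ← hB]
  have hIeq3 : ∀ q : ℝ, ∫ x, |u x| ^ q = s * ∫ x, |Φ x| ^ q := by
    intro q
    rw [show (fun x => |u x| ^ q) = fun x => (fun y => |Φ y| ^ q) (l • x) from rfl,
      hcomp (fun y => |Φ y| ^ q)]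
  -- the candidate upper bound function
  set g : ℝ → ℝ := fun q => (l^2 * (s * A) + s * B) * (((s * ∫ x, |Φ x| ^ q) ^ (2/q)))⁻¹
    with hgdef
  have hmem : ∀ q : ℝ, 2 < q → sInf (S d q) ≤ g q := by
    intro q hq
    have hq0 : (0:ℝ) < q := by linarith
    refine csInf_le (S_bddBelow d q) ?_
    refine ⟨u, hu, h2u, ?_, ?_⟩
    · rw [hIeq3 q]
      exact (mul_pos hspos (hΦpos q hq0)).ne'
    · rw [hIeq1, hIeq2, hIeq3 q, hgdef, div_eq_mul_inv]
  -- the limit of `g`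
  have hCq : Tendsto (fun q : ℝ => ∫ x, |Φ x| ^ q) (nhdsWithin 2 (Set.Ioi 2)) (nhds B) :=
    tendsto_int_rpow hΦc hΦcs hΦ0 hΦ1
  have hexp : Tendsto (fun q : ℝ => 2/q) (nhdsWithin 2 (Set.Ioi 2)) (nhds 1) := by
    have : Tendsto (fun q : ℝ => 2/q) (nhds 2) (nhds 1) := by
      have := (continuousAt_const.div continuousAt_id two_ne_zero :
        ContinuousAt (fun q : ℝ => 2/q) 2)
      rw [show (1:ℝ) = 2/2 by norm_num]; exact this.tendsto
    exact this.mono_left nhdsWithin_le_nhds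
  have hsBpos : 0 < s * B := mul_pos hspos hBpos
  have hglim : Tendsto g (nhdsWithin 2 (Set.Ioi 2)) (nhds ((l^2 * (s * A) + s * B) * (s*B)⁻¹)) := by
    have hbase : Tendsto (fun q : ℝ => s * ∫ x, |Φ x| ^ q) (nhdsWithin 2 (Set.Ioi 2))
        (nhds (s * B)) := hCq.const_mul s
    have hrpow : Tendsto (fun q : ℝ => (s * ∫ x, |Φ x| ^ q) ^ (2/q))
        (nhdsWithin 2 (Set.Ioi 2)) (nhds ((s*B) ^ (1:ℝ))) :=
      hbase.rpow hexp (Or.inl hsBpos.ne')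
    rw [Real.rpow_one] at hrpow
    exact (hrpow.inv₀ hsBpos.ne').const_mul _
  have hlimlt : (l^2 * (s * A) + s * B) * (s*B)⁻¹ < b := by
    rw [← div_eq_mul_inv]
    rw [div_lt_iff₀ hsBpos]
    have h1 : l^2*A < B*((b-1)/2) := by
      rw [div_lt_div_iff₀ hBpos two_pos] at hl
      nlinarith
    nlinarith [hspos, hBpos]
  have hev := hglim.eventually_lt_const hlimlt
  filter_upwards [hev, self_mem_nhdsWithin] with q hq1 hq2
  exact lt_of_le_of_lt (hmem q hq2) hq1

/-! ### The lower bound -/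

lemma lower (d : ℕ) (hd : 1 ≤ d) {b : ℝ} (hb : b < 1) :
    ∀ᶠ q in nhdsWithin (2:ℝ) (Set.Ioi 2), b < sInf (S d q) := by
  obtain ⟨r, K, hr, hK, H⟩ :
      ∃ r K : ℝ, 2 < r ∧ 1 ≤ K ∧
        ∀ u : EuclideanSpace ℝ (Fin d) → ℝ, ContDiff ℝ 1 u → HasCompactSupport u →
          (∫ x, |u x| ^ r) ≤
            (K * ((∫ x, ‖gradient u x‖ ^ 2) + ∫ x, u x ^ 2)) ^ (r/2) := by
    rcases Nat.lt_or_ge d 2 with h2 | h2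
    · have hd1 : d = 1 := by omega
      subst hd1
      exact ⟨4, 1, by norm_num, le_rfl, sobolev_d1⟩
    · obtain ⟨K, hK, H⟩ := sobolev_d2 h2
      refine ⟨2*(d:ℝ)/((d:ℝ)-1), K, ?_, hK, H⟩
      have hcast : (2:ℝ) ≤ (d:ℝ) := by exact_mod_cast h2
      rw [lt_div_iff₀ (by linarith : (0:ℝ) < (d:ℝ)-1)]
      linarith
  have hK0 : (0:ℝ) < K := zero_lt_one.trans_le hK
  set e : ℝ → ℝ := fun q => -(r * ((q - 2)/(r - 2)) / q) with hedef
  have hecont : ContinuousAt e 2 := by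
    refine ContinuousAt.neg ?_
    refine ContinuousAt.div ?_ continuousAt_id two_ne_zero
    exact (continuousAt_const.mul ((continuousAt_id.sub continuousAt_const).div_const _))
  have helim : Tendsto e (nhdsWithin 2 (Set.Ioi 2)) (nhds 0) := by
    have h2 : e 2 = 0 := by rw [hedef]; norm_num
    have := hecont.tendsto
    rw [h2] at this
    exact this.mono_left nhdsWithin_le_nhds
  have hllim : Tendsto (fun q => K ^ (e q)) (nhdsWithin 2 (Set.Ioi 2)) (nhds 1) := by
    have := Filter.Tendsto.rpow (tendsto_const_nhds (x := K)) helim (Or.inl hK0.ne')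
    rwa [Real.rpow_zero] at this
  have hev1 := hllim.eventually_const_lt hb
  have hevr : ∀ᶠ q in nhdsWithin (2:ℝ) (Set.Ioi 2), q < r :=
    (eventually_lt_nhds hr).filter_mono nhdsWithin_le_nhds
  filter_upwards [hev1, hevr, self_mem_nhdsWithin] with q h1 h2 h3
  refine h1.trans_le ?_
  refine le_csInf (S_nonempty d (zero_lt_two.trans h3)) ?_
  intro a ha
  exact lower_core hr hK H h3 h2 ha

end KqdAux

open KqdAux

/-- `lim_{q→2⁺} K_{q,d} = 1`. -/
theorem Kqd_tendsto_one (d : ℕ) (hd : 1 ≤ d) :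
    Tendsto (fun q => Kqd d q) (nhdsWithin 2 (Set.Ioi 2)) (nhds 1) := by
  have hKS : ∀ q : ℝ, Kqd d q = sInf (S d q) := fun q => rfl
  rw [tendsto_order]
  constructor
  · intro b hb
    simpa only [hKS] using lower d hd hb
  · intro b hb
    simpa only [hKS] using upper d hb

end
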